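/- arXiv:math-ph/0411012 — 4 statements merged into one kernel-verified Lean document; each statement's English description precedes it below -/
import Mathlib

section
/- Let v : ℝ → ℝ be continuous and 2π-periodic, h > 0, q ∈ ℝ, E ∈ ℝ, and c, δ > 0. Suppose Ψ : ℝ → ℂ is smooth and satisfies the Bloch condition Ψ(x+2π) = e^{2πiq}Ψ(x) for all x, together with (∫_{−π}^{π}|Ψ(x)|²dx)^{1/2} ≥ c and (∫_{−π}^{π}|−h²Ψ''(x) + v(x)Ψ(x) − EΨ(x)|²dx)^{1/2} ≤ δ. Then for every ρ > (√2/c)·δ there exists a smooth, compactly supported, not identically zero function φ : ℝ → ℂ such that (∫_ℝ |−h²φ''(x) + v(x)φ(x) − Eφ(x)|²dx)^{1/2} ≤ ρ · (∫_ℝ |φ(x)|²dx)^{1/2}. -/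
open Real MeasureTheory

/-!
Cut the Bloch quasimode `Ψ` off with a smooth plateau `χ` equal to `1` on `n` periods and
supported in `n + 2` periods. Since `‖Ψ‖` and `‖(L̂ - E)Ψ‖` are `2π`-periodic, `‖χΨ‖² ≥ n c²`,
while `(L̂ - E)(χΨ) = χ (L̂ - E)Ψ - h² (χ''Ψ + 2χ'Ψ')` has squared norm at most
`2 (n + 2) δ² + K`: the commutator term lives on the two transition zones of `χ`, where it is
dominated by a fixed bump and its translate, so `K` does not depend on `n`. As `n → ∞` the ratio
of the squared norms tends to `2δ²/c² < ρ²`.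
-/

open Function Set

noncomputable section

def smoothStep (T x : ℝ) : ℝ := smoothTransition (x / T)

def plateau (T : ℝ) (n : ℕ) (x : ℝ) : ℝ := smoothStep T x - smoothStep T (x - (n + 1) * T)

def schrodinger (h : ℝ) (v : ℝ → ℝ) (E : ℝ) (f : ℝ → ℂ) (x : ℝ) : ℂ :=
  -(h : ℂ) ^ 2 * deriv (deriv f) x + (v x : ℂ) * f x - (E : ℂ) * f x

end

lemma eqOn_deriv_zero_of_eqOn_const {F : Type*} [NormedAddCommGroup F] [NormedSpace ℝ F]
    {f : ℝ → F} {s : Set ℝ} {c : F} (h : EqOn f (fun _ => c) s) (hs : IsOpen s) :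
    EqOn (deriv f) 0 s :=
  fun x hx => by simpa using h.deriv hs hx

lemma deriv_sub_comp_sub_const {g : ℝ → ℝ} (hg : Differentiable ℝ g) (L : ℝ) :
    deriv (fun x => g x - g (x - L)) = fun x => deriv g x - deriv g (x - L) := by
  ext x
  rw [deriv_fun_sub (hg x) (by fun_prop), deriv_comp_sub_const]

lemma Function.Periodic.intervalIntegral_add_nat_mul_eq {f : ℝ → ℝ} {T : ℝ} (hf : Periodic f T)
    (hfc : Continuous f) (n : ℕ) (t s : ℝ) :
    ∫ x in t..t + n * T, f x = n * ∫ x in s..s + T, f x := by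
  simpa [zsmul_eq_mul, hf.intervalIntegral_add_eq t s] using
    hf.intervalIntegral_add_zsmul_eq n t fun _ _ => hfc.intervalIntegrable _ _

lemma Complex.norm_ofReal_mul_sq (r : ℝ) (z : ℂ) : ‖(r : ℂ) * z‖ ^ 2 = r ^ 2 * ‖z‖ ^ 2 := by
  rw [norm_mul, Complex.norm_real, Real.norm_eq_abs, mul_pow, sq_abs]

lemma norm_add_sq_le_of_norm_le_add {F : Type*} [SeminormedAddCommGroup F] {a b : F} {p q : ℝ}
    (hb : ‖b‖ ≤ p + q) : ‖a + b‖ ^ 2 ≤ 2 * ‖a‖ ^ 2 + 4 * p ^ 2 + 4 * q ^ 2 := by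
  have hab : ‖a + b‖ ≤ ‖a‖ + (p + q) := (norm_add_le a b).trans (by gcongr)
  calc ‖a + b‖ ^ 2 ≤ (‖a‖ + (p + q)) ^ 2 := by gcongr
    _ ≤ 2 * (‖a‖ ^ 2 + (p + q) ^ 2) := add_sq_le
    _ ≤ 2 * ‖a‖ ^ 2 + 4 * p ^ 2 + 4 * q ^ 2 := by nlinarith [add_sq_le (a := p) (b := q)]

namespace smoothStep

variable {T x : ℝ}

lemma nonneg : 0 ≤ smoothStep T x := smoothTransition.nonneg _

lemma le_one : smoothStep T x ≤ 1 := smoothTransition.le_one _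

lemma eq_zero (hT : 0 < T) (hx : x ≤ 0) : smoothStep T x = 0 :=
  smoothTransition.zero_of_nonpos (div_nonpos_of_nonpos_of_nonneg hx hT.le)

lemma eq_one (hT : 0 < T) (hx : T ≤ x) : smoothStep T x = 1 :=
  smoothTransition.one_of_one_le ((one_le_div hT).mpr hx)

lemma monotone (hT : 0 ≤ T) : Monotone (smoothStep T) :=
  smoothTransition.monotone.comp fun _ _ hxy => div_le_div_of_nonneg_right hxy hT

lemma contDiff {n : ℕ∞} : ContDiff ℝ n (smoothStep T) :=
  smoothTransition.contDiff.comp (contDiff_id.div_const T)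

lemma differentiable : Differentiable ℝ (smoothStep T) :=
  contDiff.differentiable (n := 1) one_ne_zero

lemma differentiable_deriv : Differentiable ℝ (deriv (smoothStep T)) :=
  contDiff.differentiable_deriv_two

lemma eqOn_deriv (hT : 0 < T) : EqOn (deriv (smoothStep T)) 0 (Icc 0 T)ᶜ := by
  intro x hx
  rcases not_and_or.mp hx with hx | hx
  · exact eqOn_deriv_zero_of_eqOn_const (c := 0) (fun _ hy => eq_zero hT (le_of_lt hy))
      isOpen_Iio (not_le.mp hx)
  · exact eqOn_deriv_zero_of_eqOn_const (c := 1) (fun _ hy => eq_one hT (le_of_lt hy))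
      isOpen_Ioi (not_le.mp hx)

lemma eqOn_deriv_deriv (hT : 0 < T) : EqOn (deriv (deriv (smoothStep T))) 0 (Icc 0 T)ᶜ :=
  eqOn_deriv_zero_of_eqOn_const (eqOn_deriv hT) isClosed_Icc.isOpen_compl

end smoothStep

namespace plateau

variable {T : ℝ} {n : ℕ} {x : ℝ}

lemma eq_one (hT : 0 < T) (h₁ : T ≤ x) (h₂ : x ≤ (n + 1) * T) : plateau T n x = 1 := by
  rw [plateau, smoothStep.eq_one hT h₁, smoothStep.eq_zero hT (by linarith), sub_zero]

lemma eq_zero (hT : 0 < T) (hx : x ∉ Ioc 0 ((n + 2) * T)) : plateau T n x = 0 := by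
  rcases not_and_or.mp hx with hx | hx
  · rw [plateau, smoothStep.eq_zero hT (not_lt.mp hx), smoothStep.eq_zero hT (by nlinarith),
      sub_zero]
  · rw [plateau, smoothStep.eq_one hT (by nlinarith), smoothStep.eq_one hT (by linarith),
      sub_self]

lemma sq_le_one (hT : 0 ≤ T) : plateau T n x ^ 2 ≤ 1 :=
  pow_le_one₀ (sub_nonneg.mpr (smoothStep.monotone hT (by nlinarith)))
    ((sub_le_self _ smoothStep.nonneg).trans smoothStep.le_one)

lemma hasCompactSupport (hT : 0 < T) : HasCompactSupport (plateau T n) :=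
  HasCompactSupport.intro (isCompact_Icc (a := 0) (b := (n + 2) * T)) fun _ hx =>
    eq_zero hT fun h => hx (Ioc_subset_Icc_self h)

lemma contDiff {k : ℕ∞} : ContDiff ℝ k (plateau T n) :=
  smoothStep.contDiff.sub (smoothStep.contDiff.comp (contDiff_id.sub contDiff_const))

lemma continuous : Continuous (plateau T n) := (contDiff (k := 0)).continuous

lemma deriv_eq : deriv (plateau T n) =
    fun x => deriv (smoothStep T) x - deriv (smoothStep T) (x - (n + 1) * T) :=
  deriv_sub_comp_sub_const smoothStep.differentiable _

lemma deriv_deriv_eq : deriv (deriv (plateau T n)) =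
    fun x => deriv (deriv (smoothStep T)) x - deriv (deriv (smoothStep T)) (x - (n + 1) * T) := by
  rw [deriv_eq, deriv_sub_comp_sub_const smoothStep.differentiable_deriv]

lemma integral_sq_mul_eq (hT : 0 < T) (f : ℝ → ℝ) :
    ∫ x, plateau T n x ^ 2 * f x = ∫ x in 0..(n + 2) * T, plateau T n x ^ 2 * f x := by
  rw [intervalIntegral.integral_of_le (by positivity),
    setIntegral_eq_integral_of_forall_compl_eq_zero fun x hx => by simp [eq_zero hT hx]]

section Periodic

variable {f : ℝ → ℝ} (hT : 0 < T) (hf : Continuous f) (hf₀ : ∀ x, 0 ≤ f x) (hper : Periodic f T)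
include hT hf hf₀ hper

lemma integral_sq_mul_le (s : ℝ) :
    ∫ x, plateau T n x ^ 2 * f x ≤ (n + 2) * ∫ x in s..s + T, f x := by
  have hcont : Continuous fun x => plateau T n x ^ 2 * f x := (continuous.pow 2).mul hf
  rw [integral_sq_mul_eq hT]
  calc ∫ x in 0..(n + 2) * T, plateau T n x ^ 2 * f x ≤ ∫ x in 0..(n + 2) * T, f x :=
        intervalIntegral.integral_mono_on (by positivity) (hcont.intervalIntegrable _ _)
          (hf.intervalIntegrable _ _) fun x _ => mul_le_of_le_one_left (hf₀ x) (sq_le_one hT.le)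
    _ = (n + 2) * ∫ x in s..s + T, f x := by
        simpa using hper.intervalIntegral_add_nat_mul_eq hf (n + 2) 0 s

lemma le_integral_sq_mul (s : ℝ) :
    n * ∫ x in s..s + T, f x ≤ ∫ x, plateau T n x ^ 2 * f x := by
  have hcont : Continuous fun x => plateau T n x ^ 2 * f x := (continuous.pow 2).mul hf
  have hnT : 0 ≤ n * T := by positivity
  calc n * ∫ x in s..s + T, f x = ∫ x in T..T + n * T, f x :=
        (hper.intervalIntegral_add_nat_mul_eq hf n T s).symm
    _ = ∫ x in T..T + n * T, plateau T n x ^ 2 * f x := by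
        refine intervalIntegral.integral_congr fun x hx => ?_
        rw [uIcc_of_le (by linarith)] at hx
        rw [eq_one hT hx.1 (by linarith [hx.2]), one_pow, one_mul]
    _ ≤ ∫ x in 0..(n + 2) * T, plateau T n x ^ 2 * f x :=
        intervalIntegral.integral_mono_interval hT.le (by linarith) (by linarith)
          (Filter.Eventually.of_forall fun x => mul_nonneg (sq_nonneg _) (hf₀ x))
          (hcont.intervalIntegrable _ _)
    _ = ∫ x, plateau T n x ^ 2 * f x := (integral_sq_mul_eq hT f).symm

end Periodic

end plateau

lemma deriv_deriv_ofReal_mul {χ : ℝ → ℝ} {ψ : ℝ → ℂ} (hχ : ContDiff ℝ 2 χ) (hψ : ContDiff ℝ 2 ψ)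
    (x : ℝ) :
    deriv (deriv fun y => (χ y : ℂ) * ψ y) x =
      deriv (deriv χ) x * ψ x + 2 * deriv χ x * deriv ψ x + χ x * deriv (deriv ψ) x := by
  have hχ₁ := hχ.differentiable two_ne_zero
  have hψ₁ := hψ.differentiable two_ne_zero
  have hχ₂ := hχ.differentiable_deriv_two
  have hψ₂ := hψ.differentiable_deriv_two
  have hd : deriv (fun y => (χ y : ℂ) * ψ y) =
      fun y => ((deriv χ y : ℝ) : ℂ) * ψ y + χ y * deriv ψ y :=
    funext fun y => ((hχ₁ y).hasDerivAt.ofReal_comp.fun_mul (hψ₁ y).hasDerivAt).deriv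
  rw [hd, (((hχ₂ x).hasDerivAt.ofReal_comp.fun_mul (hψ₁ x).hasDerivAt).fun_add
    ((hχ₁ x).hasDerivAt.ofReal_comp.fun_mul (hψ₂ x).hasDerivAt)).deriv]
  ring

section Bloch

variable {h E T : ℝ} {v : ℝ → ℝ} {θ : ℂ} {ψ : ℝ → ℂ}

lemma schrodinger_ofReal_mul {χ : ℝ → ℝ} (hχ : ContDiff ℝ 2 χ) (hψ : ContDiff ℝ 2 ψ) (x : ℝ) :
    schrodinger h v E (fun y => (χ y : ℂ) * ψ y) x = χ x * schrodinger h v E ψ x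
      - (h : ℂ) ^ 2 * (deriv (deriv χ) x * ψ x + 2 * deriv χ x * deriv ψ x) := by
  rw [schrodinger, schrodinger, deriv_deriv_ofReal_mul hχ hψ]
  ring

lemma deriv_add_of_bloch (hψ : ∀ x, ψ (x + T) = θ * ψ x) (x : ℝ) :
    deriv ψ (x + T) = θ * deriv ψ x := by
  rw [← deriv_comp_add_const, funext hψ, deriv_const_mul_field]

lemma schrodinger_add_of_bloch (hv : Periodic v T) (hψ : ∀ x, ψ (x + T) = θ * ψ x) (x : ℝ) :
    schrodinger h v E ψ (x + T) = θ * schrodinger h v E ψ x := by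
  simp only [schrodinger, deriv_add_of_bloch (deriv_add_of_bloch hψ), hψ, hv x]
  ring

lemma periodic_norm_of_bloch (hθ : ‖θ‖ = 1) (hψ : ∀ x, ψ (x + T) = θ * ψ x) :
    Periodic (fun x => ‖ψ x‖) T :=
  fun x => by simp only [hψ, norm_mul, hθ, one_mul]

/-- The derivatives of `plateau T n` are those of `smoothStep T` minus those of its translate by
`(n + 1) * T`, and `‖ψ‖`, `‖ψ'‖` are invariant under that translation. -/
lemma exists_norm_commutator_plateau_le (hT : 0 < T) (hψ : ContDiff ℝ 2 ψ) (hθ : ‖θ‖ = 1)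
    (hB : ∀ x, ψ (x + T) = θ * ψ x) :
    ∃ k : ℝ → ℝ, Continuous k ∧ HasCompactSupport k ∧ ∀ (n : ℕ) (x : ℝ),
      ‖(h : ℂ) ^ 2 * (deriv (deriv (plateau T n)) x * ψ x + 2 * deriv (plateau T n) x * deriv ψ x)‖
        ≤ k x + k (x - (n + 1) * T) := by
  set u := deriv (smoothStep T)
  set w := deriv (deriv (smoothStep T))
  refine ⟨fun y => h ^ 2 * (|w y| * ‖ψ y‖ + 2 * |u y| * ‖deriv ψ y‖), ?_, ?_, fun n x => ?_⟩
  · have hu : Continuous u := smoothStep.contDiff.continuous_deriv_one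
    have hw : Continuous w := (smoothStep.contDiff.deriv' (n := 1)).continuous_deriv_one
    have hψ₁ : Continuous (deriv ψ) := hψ.continuous_deriv one_le_two
    fun_prop
  · refine HasCompactSupport.intro (isCompact_Icc (a := 0) (b := T)) fun x hx => ?_
    have hux : u x = 0 := smoothStep.eqOn_deriv hT hx
    have hwx : w x = 0 := smoothStep.eqOn_deriv_deriv hT hx
    simp [hux, hwx]
  · have hper : ∀ f : ℝ → ℂ, (∀ x, f (x + T) = θ * f x) → ‖f (x - (n + 1) * T)‖ = ‖f x‖ :=
      fun f hf => by exact_mod_cast ((periodic_norm_of_bloch hθ hf).nat_mul (n + 1)).sub_eq x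
    rw [plateau.deriv_deriv_eq, plateau.deriv_eq]
    calc _ = h ^ 2 * ‖((w x - w (x - (n + 1) * T) : ℝ) : ℂ) * ψ x
            + 2 * ((u x - u (x - (n + 1) * T) : ℝ) : ℂ) * deriv ψ x‖ := by
          rw [norm_mul, norm_pow, Complex.norm_real, Real.norm_eq_abs, sq_abs]
      _ ≤ h ^ 2 * (|w x - w (x - (n + 1) * T)| * ‖ψ x‖
            + 2 * |u x - u (x - (n + 1) * T)| * ‖deriv ψ x‖) := by
          gcongr
          refine (norm_add_le _ _).trans_eq ?_
          simp only [norm_mul, Complex.norm_real, Real.norm_eq_abs, Complex.norm_ofNat]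
      _ ≤ h ^ 2 * ((|w x| + |w (x - (n + 1) * T)|) * ‖ψ x‖
            + 2 * (|u x| + |u (x - (n + 1) * T)|) * ‖deriv ψ x‖) := by
          gcongr <;> exact abs_sub _ _
      _ = _ := by
          dsimp only
          rw [hper ψ hB, hper (deriv ψ) (deriv_add_of_bloch hB)]
          ring

lemma le_integral_norm_plateau_mul_sq (hT : 0 < T) (hψ : Continuous ψ) (hθ : ‖θ‖ = 1)
    (hB : ∀ x, ψ (x + T) = θ * ψ x) (n : ℕ) (s : ℝ) :
    n * ∫ x in s..s + T, ‖ψ x‖ ^ 2 ≤ ∫ x, ‖(plateau T n x : ℂ) * ψ x‖ ^ 2 := by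
  simp only [Complex.norm_ofReal_mul_sq]
  exact plateau.le_integral_sq_mul (f := fun x => ‖ψ x‖ ^ 2) hT (hψ.norm.pow 2)
    (fun _ => sq_nonneg _) ((periodic_norm_of_bloch hθ hB).comp (· ^ 2)) s

lemma exists_integral_norm_schrodinger_plateau_mul_le (hT : 0 < T)
    (hv : Continuous v) (hvper : Periodic v T) (hψ : ContDiff ℝ 2 ψ) (hθ : ‖θ‖ = 1)
    (hB : ∀ x, ψ (x + T) = θ * ψ x) (s : ℝ) :
    ∃ K, ∀ n : ℕ, ∫ x, ‖schrodinger h v E (fun y => (plateau T n y : ℂ) * ψ y) x‖ ^ 2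
      ≤ 2 * (n + 2) * (∫ x in s..s + T, ‖schrodinger h v E ψ x‖ ^ 2) + K := by
  obtain ⟨k, hk, hks, hkle⟩ := exists_norm_commutator_plateau_le (h := h) hT hψ hθ hB
  set F := schrodinger h v E ψ
  have hF : Continuous F := by
    have hψ₀ := hψ.continuous
    have hψ₂ := (hψ.deriv' (n := 1)).continuous_deriv_one
    unfold F schrodinger
    fun_prop
  have hFper : Periodic (fun x => ‖F x‖ ^ 2) T :=
    (periodic_norm_of_bloch hθ (schrodinger_add_of_bloch hvper hB)).comp (· ^ 2)
  have hks₂ : HasCompactSupport fun x => k x ^ 2 := hks.comp_left (g := (· ^ 2)) (by simp)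
  have hk₂ : Integrable (fun x => k x ^ 2) := (hk.pow 2).integrable_of_hasCompactSupport hks₂
  refine ⟨8 * ∫ x, k x ^ 2, fun n => ?_⟩
  have hpFs : HasCompactSupport fun x => plateau T n x ^ 2 * ‖F x‖ ^ 2 :=
    ((plateau.hasCompactSupport hT).comp_left (g := (· ^ 2)) (by simp)).mul_right
  have hpF : Integrable (fun x => plateau T n x ^ 2 * ‖F x‖ ^ 2) :=
    ((plateau.continuous.pow 2).mul (hF.norm.pow 2)).integrable_of_hasCompactSupport hpFs
  have hpt : ∀ x, ‖schrodinger h v E (fun y => (plateau T n y : ℂ) * ψ y) x‖ ^ 2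
      ≤ 2 * (plateau T n x ^ 2 * ‖F x‖ ^ 2) + 4 * k x ^ 2 + 4 * k (x - (n + 1) * T) ^ 2 := by
    intro x
    rw [schrodinger_ofReal_mul plateau.contDiff hψ, sub_eq_add_neg, ← Complex.norm_ofReal_mul_sq]
    exact norm_add_sq_le_of_norm_le_add ((norm_neg _).trans_le (hkle n x))
  have hk₂L : Integrable (fun x => k (x - (n + 1) * T) ^ 2) := hk₂.comp_sub_right _
  have hsum : Integrable (fun x => 2 * (plateau T n x ^ 2 * ‖F x‖ ^ 2) + 4 * k x ^ 2) :=
    (hpF.const_mul 2).add (hk₂.const_mul 4)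
  calc _ ≤ ∫ x, (2 * (plateau T n x ^ 2 * ‖F x‖ ^ 2) + 4 * k x ^ 2
          + 4 * k (x - (n + 1) * T) ^ 2) :=
        integral_mono_of_nonneg (Filter.Eventually.of_forall fun _ => by positivity)
          (hsum.add (hk₂L.const_mul 4)) (Filter.Eventually.of_forall hpt)
    _ = 2 * (∫ x, plateau T n x ^ 2 * ‖F x‖ ^ 2) + 8 * ∫ x, k x ^ 2 := by
        rw [integral_add hsum (hk₂L.const_mul 4), integral_add (hpF.const_mul 2) (hk₂.const_mul 4),
          integral_const_mul, integral_const_mul, integral_const_mul,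
          integral_sub_right_eq_self (fun x => k x ^ 2)]
        ring
    _ ≤ _ := by
        have := plateau.integral_sq_mul_le (n := n) (f := fun x => ‖F x‖ ^ 2) hT
          (hF.norm.pow 2) (fun _ => sq_nonneg _) hFper s
        linarith

end Bloch

lemma exists_nat_le_mul_of_linear_bounds {a b : ℕ → ℝ} {α β γ r : ℝ} (hr : 0 ≤ r) (hγ : 0 < γ)
    (hαγ : α < r * γ) (ha : ∀ n : ℕ, a n ≤ n * α + β) (hb : ∀ n : ℕ, n * γ ≤ b n) :
    ∃ n, a n ≤ r * b n ∧ 0 < b n := by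
  obtain ⟨m, hm⟩ := exists_nat_ge (β / (r * γ - α))
  have hn : β ≤ (m + 1 : ℕ) * (r * γ - α) := by
    rw [div_le_iff₀ (sub_pos.mpr hαγ)] at hm
    push_cast
    nlinarith
  refine ⟨m + 1, ?_, (by positivity : (0 : ℝ) < (m + 1 : ℕ) * γ).trans_le (hb _)⟩
  calc a (m + 1) ≤ (m + 1 : ℕ) * α + β := ha _
    _ ≤ r * ((m + 1 : ℕ) * γ) := by linarith
    _ ≤ r * b (m + 1) := mul_le_mul_of_nonneg_left (hb _) hr

lemma two_mul_sq_lt_mul_sq_of_sqrt_two_div_mul_lt {c δ ρ : ℝ} (hc : 0 < c) (hδ : 0 ≤ δ)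
    (hρ : Real.sqrt 2 / c * δ < ρ) : 2 * δ ^ 2 < (ρ * c) ^ 2 := by
  rw [div_mul_eq_mul_div, div_lt_iff₀ hc] at hρ
  calc 2 * δ ^ 2 = (Real.sqrt 2 * δ) ^ 2 := by rw [mul_pow, Real.sq_sqrt zero_le_two]
    _ < (ρ * c) ^ 2 := pow_lt_pow_left₀ hρ (by positivity) two_ne_zero

theorem stmt_2_general (v : ℝ → ℝ) (hv : Continuous v) (hper : ∀ x, v (x + 2 * π) = v x)
    (h : ℝ) (q E : ℝ) (c δ : ℝ) (hc : 0 < c)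
    (Ψ : ℝ → ℂ) (hΨ : ContDiff ℝ (⊤ : ℕ∞) Ψ)
    (hBloch : ∀ x, Ψ (x + 2 * π) = Complex.exp (2 * (π : ℂ) * Complex.I * (q : ℂ)) * Ψ x)
    (hlow : Real.sqrt (∫ x in (-π)..π, ‖Ψ x‖ ^ 2) ≥ c)
    (hqm : Real.sqrt (∫ x in (-π)..π,
        ‖-(h : ℂ) ^ 2 * deriv (deriv Ψ) x + (v x : ℂ) * Ψ x - (E : ℂ) * Ψ x‖ ^ 2) ≤ δ) :
    ∀ ρ : ℝ, ρ > (Real.sqrt 2 / c) * δ →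
      ∃ φ : ℝ → ℂ, ContDiff ℝ (⊤ : ℕ∞) φ ∧ HasCompactSupport φ ∧ φ ≠ 0 ∧
        Real.sqrt (∫ x : ℝ, ‖-(h : ℂ) ^ 2 * deriv (deriv φ) x
            + (v x : ℂ) * φ x - (E : ℂ) * φ x‖ ^ 2) ≤
          ρ * Real.sqrt (∫ x : ℝ, ‖φ x‖ ^ 2) := by
  intro ρ hρ
  have hθ : ‖Complex.exp (2 * π * Complex.I * q)‖ = 1 := by simp [Complex.norm_exp]
  have hΨ₂ : ContDiff ℝ 2 Ψ := hΨ.of_le (WithTop.coe_le_coe.mpr le_top)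
  have hπ : -π + 2 * π = π := by ring
  obtain ⟨K, hK⟩ := exists_integral_norm_schrodinger_plateau_mul_le (h := h) (E := E)
    two_pi_pos hv hper hΨ₂ hθ hBloch (-π)
  have hmass := (le_integral_norm_plateau_mul_sq two_pi_pos hΨ.continuous hθ hBloch · (-π))
  rw [hπ] at hK hmass
  have hδ : 0 ≤ δ := (Real.sqrt_nonneg _).trans hqm
  set D := ∫ x in -π..π, ‖schrodinger h v E Ψ x‖ ^ 2
  set C := ∫ x in -π..π, ‖Ψ x‖ ^ 2
  have hD : D ≤ δ ^ 2 := (Real.sqrt_le_iff.mp hqm).2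
  have hC : c ^ 2 ≤ C := (Real.le_sqrt' hc).mp hlow
  have hρc := two_mul_sq_lt_mul_sq_of_sqrt_two_div_mul_lt hc hδ hρ
  obtain ⟨n, hn, hpos⟩ := exists_nat_le_mul_of_linear_bounds (α := 2 * D) (β := 4 * D + K)
    (sq_nonneg ρ) ((pow_pos hc 2).trans_le hC) (by nlinarith) (fun n => (hK n).trans_eq (by ring))
    hmass
  have hρ₀ : 0 ≤ ρ := le_trans (by positivity) hρ.le
  refine ⟨fun x => (plateau (2 * π) n x : ℂ) * Ψ x,
    (Complex.ofRealCLM.contDiff.comp plateau.contDiff).mul hΨ, ?_, fun hφ => ?_, ?_⟩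
  · exact ((plateau.hasCompactSupport two_pi_pos).comp_left Complex.ofReal_zero).mul_right
  · simp [funext_iff.mp hφ] at hpos
  · calc _ ≤ Real.sqrt (ρ ^ 2 * ∫ x, ‖(plateau (2 * π) n x : ℂ) * Ψ x‖ ^ 2) :=
          Real.sqrt_le_sqrt hn
      _ = _ := by rw [Real.sqrt_mul (sq_nonneg ρ), Real.sqrt_sq hρ₀]

theorem stmt_2 (v : ℝ → ℝ) (hv : Continuous v) (hper : ∀ x, v (x + 2 * π) = v x)
    (h : ℝ) (hh : 0 < h) (q E : ℝ) (c δ : ℝ) (hc : 0 < c) (hδ : 0 < δ)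
    (Ψ : ℝ → ℂ) (hΨ : ContDiff ℝ (⊤ : ℕ∞) Ψ)
    (hBloch : ∀ x, Ψ (x + 2 * π) = Complex.exp (2 * (π : ℂ) * Complex.I * (q : ℂ)) * Ψ x)
    (hlow : Real.sqrt (∫ x in (-π)..π, ‖Ψ x‖ ^ 2) ≥ c)
    (hqm : Real.sqrt (∫ x in (-π)..π,
        ‖-(h : ℂ) ^ 2 * deriv (deriv Ψ) x + (v x : ℂ) * Ψ x - (E : ℂ) * Ψ x‖ ^ 2) ≤ δ) :
    ∀ ρ : ℝ, ρ > (Real.sqrt 2 / c) * δ →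
      ∃ φ : ℝ → ℂ, ContDiff ℝ (⊤ : ℕ∞) φ ∧ HasCompactSupport φ ∧ φ ≠ 0 ∧
        Real.sqrt (∫ x : ℝ, ‖-(h : ℂ) ^ 2 * deriv (deriv φ) x
            + (v x : ℂ) * φ x - (E : ℂ) * φ x‖ ^ 2) ≤
          ρ * Real.sqrt (∫ x : ℝ, ‖φ x‖ ^ 2) :=
  stmt_2_general v hv hper h q E c δ hc Ψ hΨ hBloch hlow hqm
end

section
/- Let v : ℝ → ℝ be continuous and 2π-periodic, E ∈ ℝ with E > sup v, h > 0, q ∈ ℝ, and σ ∈ {+1, −1}. Define φ : ℝ → ℂ by φ(x) = (E − v(x))^{−1/4} · exp( (iσ/h) ∫₀^x √(E − v(t)) dt ). Then φ satisfies the Bloch condition φ(x+2π) = e^{2πiq}φ(x) for all x ∈ ℝ if and only if there exists n ∈ ℤ such that (1/2π) ∫₀^{2π} √(E − v(x)) dx = h(n + σq). -/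
open Real

theorem stmt_4 (v : ℝ → ℝ) (hv : Continuous v) (hper : ∀ x, v (x + 2 * π) = v x)
    (E : ℝ) (hE : (⨆ x, v x) < E) (h : ℝ) (hh : 0 < h) (q σ : ℝ)
    (hσ : σ = 1 ∨ σ = -1)
    (φ : ℝ → ℂ)
    (hφ : ∀ x, φ x = (((E - v x) ^ (-(1 / 4 : ℝ)) : ℝ) : ℂ) *
      Complex.exp (Complex.I * (σ : ℂ) / (h : ℂ) *
        ((∫ t in (0 : ℝ)..x, Real.sqrt (E - v t) : ℝ) : ℂ))) :
    (∀ x, φ (x + 2 * π) = Complex.exp (2 * (π : ℂ) * Complex.I * (q : ℂ)) * φ x) ↔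
      ∃ n : ℤ, (1 / (2 * π)) * (∫ x in (0 : ℝ)..(2 * π), Real.sqrt (E - v x))
        = h * (n + σ * q) := by
  have hπ : (0:ℝ) < 2 * π := by positivity
  have hperv : Function.Periodic v (2 * π) := hper
  -- boundedness and positivity
  have hb : BddAbove (Set.range v) := by
    rw [← hperv.image_Icc hπ 0]
    exact (isCompact_Icc.image hv).bddAbove
  have hpos : ∀ x, 0 < E - v x := fun x =>
    sub_pos.2 (lt_of_le_of_lt (le_ciSup hb x) hE)
  -- the integrand
  set f : ℝ → ℝ := fun t => Real.sqrt (E - v t) with hf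
  have hfc : Continuous f := (continuous_const.sub hv).sqrt
  have hperf : Function.Periodic f (2 * π) := fun x => by simp [hf, hper x]
  set I₀ : ℝ := ∫ x in (0:ℝ)..(2*π), f x with hI₀
  -- integral splitting
  have hsplit : ∀ x, (∫ t in (0:ℝ)..(x + 2*π), f t) = (∫ t in (0:ℝ)..x, f t) + I₀ := by
    intro x
    rw [← intervalIntegral.integral_add_adjacent_intervals
      (hfc.intervalIntegrable 0 x) (hfc.intervalIntegrable x (x + 2*π))]
    congr 1
    have := hperf.intervalIntegral_add_eq x 0
    rwa [zero_add] at this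
  -- nonvanishing of φ
  have hφne : ∀ x, φ x ≠ 0 := by
    intro x
    rw [hφ x]
    exact mul_ne_zero (by exact_mod_cast (Real.rpow_pos_of_pos (hpos x) _).ne')
      (Complex.exp_ne_zero _)
  -- shift identity
  have hshift : ∀ x, φ (x + 2*π) =
      Complex.exp (Complex.I * (σ:ℂ) / (h:ℂ) * (I₀:ℂ)) * φ x := by
    intro x
    rw [hφ (x + 2*π), hφ x, hper x, hsplit x]
    push_cast
    rw [mul_add, Complex.exp_add]
    ring
  -- reduce to equality of exponentials
  have hiff : (∀ x, φ (x + 2 * π) = Complex.exp (2 * (π:ℂ) * Complex.I * (q:ℂ)) * φ x) ↔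
      Complex.exp (Complex.I * (σ:ℂ) / (h:ℂ) * (I₀:ℂ)) =
        Complex.exp (2 * (π:ℂ) * Complex.I * (q:ℂ)) := by
    constructor
    · intro hb1
      have := (hshift 0).symm.trans (hb1 0)
      exact mul_right_cancel₀ (hφne 0) this
    · intro he x
      rw [hshift x, he]
  rw [hiff, Complex.exp_eq_exp_iff_exists_int]
  have hπ' : π ≠ 0 := Real.pi_ne_zero
  constructor
  · rintro ⟨n, hn⟩
    -- real equation: σ * I₀ / h = 2π q + n * 2π
    have hre : σ * I₀ / h = 2 * π * q + n * (2 * π) := by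
      apply Complex.ofReal_inj.mp
      push_cast
      linear_combination (-Complex.I) * hn +
        ((σ:ℂ) * (I₀:ℂ) / (h:ℂ) - 2 * (π:ℂ) * (q:ℂ) - (n:ℂ) * (2 * (π:ℂ))) * Complex.I_sq
    rcases hσ with hs | hs
    · refine ⟨n, ?_⟩
      subst hs
      field_simp at hre ⊢
      linarith
    · refine ⟨-n, ?_⟩
      subst hs
      push_cast
      field_simp at hre ⊢
      linarith
  · rintro ⟨n, hn⟩
    have hre : σ * I₀ / h = 2 * π * q + (σ * n) * (2 * π) := by
      rcases hσ with hs | hs <;> subst hs <;> field_simp at hn ⊢ <;> linarith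
    rcases hσ with hs | hs
    · refine ⟨n, ?_⟩
      have hc : ((σ * I₀ / h : ℝ) : ℂ) = ((2 * π * q + (σ * n) * (2 * π) : ℝ) : ℂ) := by
        exact Complex.ofReal_inj.mpr hre
      push_cast [hs] at hc ⊢
      linear_combination Complex.I * hc
    · refine ⟨-n, ?_⟩
      have hc : ((σ * I₀ / h : ℝ) : ℂ) = ((2 * π * q + (σ * n) * (2 * π) : ℝ) : ℂ) := by
        exact Complex.ofReal_inj.mpr hre
      push_cast [hs] at hc ⊢
      linear_combination Complex.I * hc
end

section
/- Let f : ℝ² → ℝ be smooth and suppose that all its circular averages vanish: ∫₀^{2π} f(r cos ψ, r sin ψ) dψ = 0 for every r ≥ 0. Then there exists a smooth function s : ℝ² → ℝ such that P·(∂s/∂Q)(P,Q) − Q·(∂s/∂P)(P,Q) = f(P,Q) for all (P,Q) ∈ ℝ². -/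
open Real

noncomputable section

/-- Partial derivative in the first variable of a real function on `ℝ × ℝ`. -/
def rpd1 (f : ℝ × ℝ → ℝ) (x : ℝ × ℝ) : ℝ := deriv (fun t => f (t, x.2)) x.1

/-- Partial derivative in the second variable of a real function on `ℝ × ℝ`. -/
def rpd2 (f : ℝ × ℝ → ℝ) (x : ℝ × ℝ) : ℝ := deriv (fun t => f (x.1, t)) x.2

/-
Take s(x) = (2π)⁻¹ ∫₀^{2π} ψ f(R_ψ x) dψ, with R_ψ the rotation by ψ; it is smooth as a
parametric integral of a smooth integrand over a compact interval. Along an orbit, with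
g(u) = f(R_u x), substituting u = ψ + τ gives
s(R_τ x) = (2π)⁻¹ (∫_τ^{τ+2π} u g(u) du − τ ∫_τ^{τ+2π} g) = (2π)⁻¹ ∫_τ^{τ+2π} u g(u) du,
because the circular averages of f vanish. By periodicity of g the τ-derivative of the last
expression is (2π)⁻¹ ((τ + 2π) g(τ + 2π) − τ g(τ)) = g(τ), and the derivative of s along the
rotation orbit at τ = 0 is P ∂s/∂Q − Q ∂s/∂P.
-/

open Function

universe u

section ParametricIntegral

-- One universe for `P` and `E`: the induction below passes from `E` to `P →L[ℝ] E`.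
variable {P E : Type u} [NormedAddCommGroup P] [NormedSpace ℝ P] [ProperSpace P]
  [NormedAddCommGroup E] [NormedSpace ℝ E]

theorem hasFDerivAt_intervalIntegral_param {g : ℝ × P → E} (hg : ContDiff ℝ 1 g)
    (a b : ℝ) (x₀ : P) :
    HasFDerivAt (fun x => ∫ t in a..b, g (t, x))
      (∫ t in a..b, fderiv ℝ g (t, x₀) ∘L ContinuousLinearMap.inr ℝ ℝ P) x₀ := by
  have hg' : Continuous fun p => fderiv ℝ g p ∘L ContinuousLinearMap.inr ℝ ℝ P :=
    (hg.continuous_fderiv one_ne_zero).clm_comp continuous_const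
  obtain ⟨C, hC⟩ := (isCompact_uIcc.prod (isCompact_closedBall x₀ 1)).exists_bound_of_continuousOn
    hg'.continuousOn
  refine intervalIntegral.hasFDerivAt_integral_of_dominated_of_fderiv_le
    (bound := fun _ => C) (Metric.ball_mem_nhds x₀ one_pos)
    (.of_forall fun x => (hg.continuous.comp (.prodMk_left x)).aestronglyMeasurable)
    ((hg.continuous.comp (.prodMk_left x₀)).intervalIntegrable _ _)
    (hg'.comp (.prodMk_left x₀)).aestronglyMeasurable
    (.of_forall fun t ht x hx =>
      hC (t, x) ⟨Set.uIoc_subset_uIcc ht, Metric.ball_subset_closedBall hx⟩)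
    intervalIntegrable_const (.of_forall fun t _ x _ => ?_)
  exact (hg.differentiable one_ne_zero (t, x)).hasFDerivAt.comp x (hasFDerivAt_prodMk_right t x)

theorem ContDiff.intervalIntegral_param {n : ℕ∞} {g : ℝ × P → E} (hg : ContDiff ℝ n g)
    (a b : ℝ) : ContDiff ℝ n (fun x => ∫ t in a..b, g (t, x)) := by
  induction n using ENat.nat_induction generalizing E with
  | zero =>
    exact contDiff_zero.2 <| intervalIntegral.continuous_parametric_intervalIntegral_of_continuous'
      (f := fun x t => g (t, x)) (hg.continuous.comp continuous_swap) a b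
  | succ n ih =>
    have hdiff := hasFDerivAt_intervalIntegral_param (hg.of_le (by simp)) a b
    have hn : ((n.succ : ℕ∞) : WithTop ℕ∞) = n + 1 := by norm_cast
    rw [hn, contDiff_succ_iff_fderiv] at hg ⊢
    refine ⟨fun x => (hdiff x).differentiableAt, by simp, ?_⟩
    rw [funext fun x => (hdiff x).fderiv]
    exact ih (hg.2.2.clm_comp contDiff_const)
  | top ih => exact contDiff_infty.2 fun n => ih n (hg.of_le (by exact_mod_cast le_top))

end ParametricIntegral

theorem hasDerivAt_integral_mul_comp_add {g : ℝ → ℝ} {T : ℝ} (hg : Continuous g)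
    (hper : Periodic g T) (hmean : ∫ t in 0..T, g t = 0) (τ : ℝ) :
    HasDerivAt (fun σ => ∫ t in 0..T, t * g (t + σ)) (T * g τ) τ := by
  have hmul : Continuous fun t => t * g t := continuous_id.mul hg
  have hshift : ∀ σ, ∫ t in 0..T, t * g (t + σ) =
      (∫ t in 0..σ + T, t * g t) - ∫ t in 0..σ, t * g t := by
    intro σ
    have hmean' : ∫ t in σ..σ + T, g t = 0 := by
      rw [hper.intervalIntegral_add_eq σ 0, zero_add, hmean]
    calc ∫ t in 0..T, t * g (t + σ)
        = ∫ t in σ..σ + T, (t - σ) * g t := by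
          simpa [add_comm T σ] using
            intervalIntegral.integral_comp_add_right (fun t => (t - σ) * g t) σ (a := 0) (b := T)
      _ = (∫ t in σ..σ + T, t * g t) - σ * ∫ t in σ..σ + T, g t := by
          simp only [sub_mul]
          rw [intervalIntegral.integral_sub (hmul.intervalIntegrable _ _)
            ((hg.intervalIntegrable _ _).const_mul σ),
            intervalIntegral.integral_const_mul]
      _ = _ := by
          rw [hmean', mul_zero, sub_zero, intervalIntegral.integral_interval_sub_left
            (hmul.intervalIntegrable _ _) (hmul.intervalIntegrable _ _)]
  have hprim : ∀ v, HasDerivAt (fun u => ∫ t in 0..u, t * g t) (v * g v) v := fun v =>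
    hmul.integral_hasStrictDerivAt 0 v |>.hasDerivAt
  have := ((hprim (τ + T)).comp_add_const τ T).sub (hprim τ)
  rw [hper τ, ← sub_mul, add_sub_cancel_left] at this
  exact this.congr_of_eventuallyEq (.of_forall hshift)

def planeRotation (ψ : ℝ) (x : ℝ × ℝ) : ℝ × ℝ :=
  (x.1 * cos ψ - x.2 * sin ψ, x.1 * sin ψ + x.2 * cos ψ)

theorem contDiff_planeRotation {n : WithTop ℕ∞} :
    ContDiff ℝ n fun p : ℝ × (ℝ × ℝ) => planeRotation p.1 p.2 := by
  unfold planeRotation; fun_prop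

@[simp] theorem planeRotation_zero (x : ℝ × ℝ) : planeRotation 0 x = x := by
  simp [planeRotation]

theorem planeRotation_planeRotation (ψ τ : ℝ) (x : ℝ × ℝ) :
    planeRotation ψ (planeRotation τ x) = planeRotation (ψ + τ) x := by
  simp only [planeRotation, cos_add, sin_add, Prod.mk.injEq]
  constructor <;> ring

theorem planeRotation_add_two_pi (ψ : ℝ) (x : ℝ × ℝ) :
    planeRotation (ψ + 2 * π) x = planeRotation ψ x := by
  simp [planeRotation]

theorem planeRotation_polar (ψ r θ : ℝ) :
    planeRotation ψ (r * cos θ, r * sin θ) = (r * cos (ψ + θ), r * sin (ψ + θ)) := by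
  simp only [planeRotation, cos_add, sin_add, Prod.mk.injEq]
  constructor <;> ring

theorem hasDerivAt_planeRotation_zero (x : ℝ × ℝ) :
    HasDerivAt (fun ψ => planeRotation ψ x) (-x.2, x.1) 0 := by
  have h1 := ((hasDerivAt_cos 0).const_mul x.1).sub ((hasDerivAt_sin 0).const_mul x.2)
  have h2 := ((hasDerivAt_sin 0).const_mul x.1).add ((hasDerivAt_cos 0).const_mul x.2)
  simpa [planeRotation] using h1.prodMk h2

theorem exists_polar (x : ℝ × ℝ) : ∃ r θ : ℝ, 0 ≤ r ∧ x = (r * cos θ, r * sin θ) :=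
  ⟨‖(⟨x.1, x.2⟩ : ℂ)‖, Complex.arg ⟨x.1, x.2⟩, norm_nonneg _,
    Prod.ext (Complex.norm_mul_cos_arg ⟨x.1, x.2⟩).symm (Complex.norm_mul_sin_arg ⟨x.1, x.2⟩).symm⟩

theorem integral_comp_planeRotation_eq_zero {f : ℝ × ℝ → ℝ}
    (havg : ∀ r : ℝ, 0 ≤ r → ∫ ψ in (0 : ℝ)..(2 * π), f (r * cos ψ, r * sin ψ) = 0)
    (x : ℝ × ℝ) : ∫ ψ in (0 : ℝ)..(2 * π), f (planeRotation ψ x) = 0 := by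
  obtain ⟨r, θ, hr, rfl⟩ := exists_polar x
  have hper : Periodic (fun ψ => f (r * cos ψ, r * sin ψ)) (2 * π) := fun ψ => by
    simp
  simp_rw [planeRotation_polar]
  rw [intervalIntegral.integral_comp_add_right (fun ψ => f (r * cos ψ, r * sin ψ)), zero_add,
    add_comm, hper.intervalIntegral_add_eq θ 0, zero_add, havg r hr]

theorem rpd1_eq_fderiv {s : ℝ × ℝ → ℝ} {x : ℝ × ℝ} (hs : DifferentiableAt ℝ s x) :
    rpd1 s x = fderiv ℝ s x (1, 0) :=
  (hs.hasFDerivAt.comp_hasDerivAt x.1 ((hasDerivAt_id _).prodMk (hasDerivAt_const _ _))).deriv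

theorem rpd2_eq_fderiv {s : ℝ × ℝ → ℝ} {x : ℝ × ℝ} (hs : DifferentiableAt ℝ s x) :
    rpd2 s x = fderiv ℝ s x (0, 1) :=
  (hs.hasFDerivAt.comp_hasDerivAt x.2 ((hasDerivAt_const _ _).prodMk (hasDerivAt_id _))).deriv

theorem hasDerivAt_comp_planeRotation_zero {s : ℝ × ℝ → ℝ} {x : ℝ × ℝ}
    (hs : DifferentiableAt ℝ s x) :
    HasDerivAt (fun ψ => s (planeRotation ψ x)) (x.1 * rpd2 s x - x.2 * rpd1 s x) 0 := by
  have hs' : HasFDerivAt s (fderiv ℝ s x) (planeRotation 0 x) := by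
    simpa using hs.hasFDerivAt
  have hv : ((-x.2, x.1) : ℝ × ℝ) = x.1 • ((0 : ℝ), (1 : ℝ)) - x.2 • ((1 : ℝ), (0 : ℝ)) := by
    ext <;> simp
  refine (hs'.comp_hasDerivAt 0 (hasDerivAt_planeRotation_zero x)).congr_deriv ?_
  rw [hv, map_sub, map_smul, map_smul, rpd1_eq_fderiv hs, rpd2_eq_fderiv hs, smul_eq_mul,
    smul_eq_mul]

def angularPrimitive (f : ℝ × ℝ → ℝ) (x : ℝ × ℝ) : ℝ :=
  (2 * π)⁻¹ * ∫ ψ in (0 : ℝ)..(2 * π), ψ * f (planeRotation ψ x)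

theorem contDiff_angularPrimitive {f : ℝ × ℝ → ℝ} {n : ℕ∞} (hf : ContDiff ℝ n f) :
    ContDiff ℝ n (angularPrimitive f) :=
  contDiff_const.mul <|
    (contDiff_fst.mul (hf.comp contDiff_planeRotation)).intervalIntegral_param _ _

theorem hasDerivAt_angularPrimitive_planeRotation {f : ℝ × ℝ → ℝ} (hf : Continuous f)
    (havg : ∀ r : ℝ, 0 ≤ r → ∫ ψ in (0 : ℝ)..(2 * π), f (r * cos ψ, r * sin ψ) = 0)
    (x : ℝ × ℝ) : HasDerivAt (fun τ => angularPrimitive f (planeRotation τ x)) (f x) 0 := by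
  have hg : Continuous fun u => f (planeRotation u x) :=
    hf.comp (contDiff_planeRotation (n := 0).continuous.comp (.prodMk_left x))
  have hper : Periodic (fun u => f (planeRotation u x)) (2 * π) := fun u => by
    simp only [planeRotation_add_two_pi]
  have hF := (hasDerivAt_integral_mul_comp_add hg hper
    (integral_comp_planeRotation_eq_zero havg x) 0).const_mul (2 * π)⁻¹
  rw [planeRotation_zero, inv_mul_cancel_left₀ (by positivity)] at hF
  refine hF.congr_of_eventuallyEq (.of_forall fun τ => ?_)
  simp only [angularPrimitive, planeRotation_planeRotation]

theorem stmt_9 (f : ℝ × ℝ → ℝ) (hf : ContDiff ℝ (⊤ : ℕ∞) f)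
    (havg : ∀ r : ℝ, 0 ≤ r →
      (∫ ψ in (0 : ℝ)..(2 * π), f (r * Real.cos ψ, r * Real.sin ψ)) = 0) :
    ∃ s : ℝ × ℝ → ℝ, ContDiff ℝ (⊤ : ℕ∞) s ∧
      ∀ P Q : ℝ, P * rpd2 s (P, Q) - Q * rpd1 s (P, Q) = f (P, Q) := by
  refine ⟨angularPrimitive f, contDiff_angularPrimitive hf, fun P Q => ?_⟩
  have hs : DifferentiableAt ℝ (angularPrimitive f) (P, Q) :=
    (contDiff_angularPrimitive hf).differentiable (by simp) _
  exact (hasDerivAt_comp_planeRotation_zero hs).unique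
    (hasDerivAt_angularPrimitive_planeRotation hf.continuous havg (P, Q))
end
end

section
/- Let h > 0, a₂₂ ∈ ℝ, η = a₂₂/h, and suppose η = N/M where N ∈ ℤ and M is a positive integer. Let q₁ ∈ ℝ and I₂ ∈ ℝ. Suppose there exist complex numbers C^j_k, indexed by j ∈ {0,1,…,M−1} and k ∈ ℤ, not all zero, satisfying for all such j and k: C^j_k · exp( 2πi(I₂ + k·a₂₂)/h ) = C^j_k · exp( −2πi(q₁ − jη) ). Then there exists n ∈ ℤ such that I₂ = h·( n/M − q₁ ). -/
open Real

theorem Complex.exists_int_add_eq_of_exp_two_pi_I_eq {x y : ℝ}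
    (hxy : Complex.exp (2 * π * Complex.I * x) = Complex.exp (-(2 * π * Complex.I) * y)) :
    ∃ m : ℤ, x + y = m := by
  obtain ⟨m, hm⟩ := Complex.exp_eq_exp_iff_exists_int.mp hxy
  refine ⟨m, ?_⟩
  have h2πI : 2 * (π : ℂ) * Complex.I ≠ 0 := by simp [Real.pi_ne_zero]
  have hc : 2 * π * Complex.I * ((x + y : ℝ) : ℂ) = 2 * π * Complex.I * (m : ℂ) := by
    push_cast
    linear_combination hm
  exact_mod_cast mul_left_cancel₀ h2πI hc

theorem stmt_19_general (h : ℝ) (hh : 0 < h) (a₂₂ : ℝ) (η : ℝ) (hη : η = a₂₂ / h)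
    (N : ℤ) (M : ℕ) (hrat : η = (N : ℝ) / (M : ℝ))
    (q₁ I₂ : ℝ) (C : Fin M → ℤ → ℂ)
    (hC0 : ∃ j k, C j k ≠ 0)
    (heq : ∀ (j : Fin M) (k : ℤ),
      C j k * Complex.exp (2 * (π : ℂ) * Complex.I * (((I₂ + (k : ℝ) * a₂₂) / h : ℝ) : ℂ))
        = C j k * Complex.exp (-(2 * (π : ℂ) * Complex.I) * ((q₁ - ((j : ℕ) : ℝ) * η : ℝ) : ℂ))) :
    ∃ n : ℤ, I₂ = h * ((n : ℝ) / (M : ℝ) - q₁) := by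
  obtain ⟨j, k, hjk⟩ := hC0
  obtain ⟨m, hm⟩ := Complex.exists_int_add_eq_of_exp_two_pi_I_eq (mul_left_cancel₀ hjk (heq j k))
  have hM : (M : ℝ) ≠ 0 := Nat.cast_ne_zero.mpr (Fin.pos j).ne'
  have ha : a₂₂ = h * N / M := by rw [mul_div_assoc, ← hrat, hη]; field_simp
  -- `hm` reads `I₂ / h + q₁ = m + (j - k) * N / M`
  refine ⟨m * M + (j - k) * N, ?_⟩
  subst ha hrat
  field_simp at hm ⊢
  push_cast
  linear_combination hm

theorem stmt_19 (h : ℝ) (hh : 0 < h) (a₂₂ : ℝ) (η : ℝ) (hη : η = a₂₂ / h)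
    (N : ℤ) (M : ℕ) (hM : 0 < M) (hrat : η = (N : ℝ) / (M : ℝ))
    (q₁ I₂ : ℝ) (C : Fin M → ℤ → ℂ)
    (hC0 : ∃ j k, C j k ≠ 0)
    (heq : ∀ (j : Fin M) (k : ℤ),
      C j k * Complex.exp (2 * (π : ℂ) * Complex.I * (((I₂ + (k : ℝ) * a₂₂) / h : ℝ) : ℂ))
        = C j k * Complex.exp (-(2 * (π : ℂ) * Complex.I) * ((q₁ - ((j : ℕ) : ℝ) * η : ℝ) : ℂ))) :
    ∃ n : ℤ, I₂ = h * ((n : ℝ) / (M : ℝ) - q₁) :=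
  stmt_19_general h hh a₂₂ η hη N M hrat q₁ I₂ C hC0 heq
end
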